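/- arXiv:1909.01739 — 7 statements merged into one kernel-verified Lean document; each statement's English description precedes it below -/
import Mathlib

section
/- Suppose ζ₁ > ζ₂. Then I*(X) = X almost surely is the unique minimizer (up to a.s. equality of I(X)) in 𝓘 of I ↦ ρ(X − I(X); ζ₁) + ρ(I(X); ζ₂): namely, any I ∈ 𝓘 with P(I(X) < X) > 0 yields a strictly larger value than ρ(X; ζ₂), while I(X) = X a.s. attains the value ρ(X; ζ₂). -/
open MeasureTheory Set

/-- The class `𝓘` of indemnity functions. -/
def Indem (I : ℝ → ℝ) : Prop :=
  I 0 = 0 ∧ ∀ x y : ℝ, 0 ≤ y → y < x → 0 ≤ I x - I y ∧ I x - I y ≤ x - y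

/-- If `ζ₁ > ζ₂`, full insurance `I(X) = X` (a.s.) is the unique minimizer
(up to a.s. equality) of `I ↦ ρ(X - I(X); ζ₁) + ρ(I(X); ζ₂)` over `𝓘`:
any `I ∈ 𝓘` with `P(I(X) < X) > 0` gives a value strictly larger than
`ρ(X; ζ₂)`, while `I(X) = X` a.s. attains the value `ρ(X; ζ₂)`. -/
theorem pareto_optimal_full_insurance {Ω : Type*} [MeasurableSpace Ω]
    (μ : Measure Ω) [IsProbabilityMeasure μ]
    (ρ : (Ω → ℝ) → ℝ → ℝ) (X : Ω → ℝ)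
    (hXpos : ∀ ω, 0 ≤ X ω) (hXbdd : ∃ C : ℝ, ∀ ω, |X ω| ≤ C)
    (hXnc : ∀ c : ℝ, ¬ (∀ᵐ ω ∂μ, X ω = c))
    -- for each `γ ∈ [0,1]`, `ρ(·; γ)` is monotone,
    (hmono : ∀ γ ∈ Icc (0:ℝ) 1, ∀ Y₁ Y₂ : Ω → ℝ,
      (∀ᵐ ω ∂μ, Y₁ ω ≤ Y₂ ω) → ρ Y₁ γ ≤ ρ Y₂ γ)
    -- normalized,
    (h0 : ∀ γ ∈ Icc (0:ℝ) 1, ρ (fun _ => 0) γ = 0)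
    (h1 : ∀ γ ∈ Icc (0:ℝ) 1, ρ (fun _ => 1) γ = 1)
    -- and comonotonic additive along `𝓘`;
    (hcom : ∀ γ ∈ Icc (0:ℝ) 1, ∀ Y : Ω → ℝ, ∀ I : ℝ → ℝ, Indem I →
      ρ Y γ = ρ (fun ω => I (Y ω)) γ + ρ (fun ω => Y ω - I (Y ω)) γ)
    -- for `I ∈ 𝓘` with `P(I(X) > 0) > 0`, `γ ↦ ρ(I(X); γ)` is continuous and
    -- strictly increasing on `[0,1]`.
    (hstrict : ∀ I : ℝ → ℝ, Indem I → 0 < μ {ω | 0 < I (X ω)} →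
      ContinuousOn (fun γ => ρ (fun ω => I (X ω)) γ) (Icc (0:ℝ) 1) ∧
      StrictMonoOn (fun γ => ρ (fun ω => I (X ω)) γ) (Icc (0:ℝ) 1))
    (ζ₁ ζ₂ : ℝ) (hζ₁ : ζ₁ ∈ Icc (0:ℝ) 1) (hζ₂ : ζ₂ ∈ Icc (0:ℝ) 1)
    (hlt : ζ₂ < ζ₁) :
    (∀ I : ℝ → ℝ, Indem I → 0 < μ {ω | I (X ω) < X ω} →
      ρ X ζ₂ < ρ (fun ω => X ω - I (X ω)) ζ₁ + ρ (fun ω => I (X ω)) ζ₂)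
    ∧ (∀ I : ℝ → ℝ, Indem I → (∀ᵐ ω ∂μ, I (X ω) = X ω) →
      ρ (fun ω => X ω - I (X ω)) ζ₁ + ρ (fun ω => I (X ω)) ζ₂ = ρ X ζ₂) := by
  constructor
  · intro I hI hpos
    -- complementary indemnity
    set J : ℝ → ℝ := fun x => x - I x with hJdef
    have hJ : Indem J := by
      constructor
      · simp [hJdef, hI.1]
      · intro x y hy hxy
        obtain ⟨h1', h2'⟩ := hI.2 x y hy hxy
        constructor <;> simp [hJdef] <;> linarith
    have hset : {ω | 0 < J (X ω)} = {ω | I (X ω) < X ω} := by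
      ext ω; simp [hJdef, sub_pos]
    have hposJ : 0 < μ {ω | 0 < J (X ω)} := by rw [hset]; exact hpos
    have hsm := (hstrict J hJ hposJ).2 hζ₂ hζ₁ hlt
    have hadd := hcom ζ₂ hζ₂ X I hI
    simp only [hJdef] at hsm
    linarith
  · intro I hI has
    have h1' : ρ (fun ω => X ω - I (X ω)) ζ₁ = 0 := by
      have hle : ρ (fun ω => X ω - I (X ω)) ζ₁ ≤ ρ (fun _ => (0:ℝ)) ζ₁ :=
        hmono ζ₁ hζ₁ _ _ (has.mono fun ω h => by simp [h])
      have hge : ρ (fun _ => (0:ℝ)) ζ₁ ≤ ρ (fun ω => X ω - I (X ω)) ζ₁ :=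
        hmono ζ₁ hζ₁ _ _ (has.mono fun ω h => by simp [h])
      have := h0 ζ₁ hζ₁
      linarith
    have h2' : ρ (fun ω => I (X ω)) ζ₂ = ρ X ζ₂ := by
      have hle : ρ (fun ω => I (X ω)) ζ₂ ≤ ρ X ζ₂ :=
        hmono ζ₂ hζ₂ _ _ (has.mono fun ω h => le_of_eq h)
      have hge : ρ X ζ₂ ≤ ρ (fun ω => I (X ω)) ζ₂ :=
        hmono ζ₂ hζ₂ _ _ (has.mono fun ω h => ge_of_eq h)
      linarith
    linarith
end

section
/- If γ₁ ≤ γ₂, then for every pair of submitted strategies (ζ₁, ζ₂) ∈ [0,1]², the sum of (unconstrained) welfare gains ĤWG₁(ζ₁,ζ₂) + ĤWG₂(ζ₁,ζ₂) ≤ 0; consequently ĤWG₁ > 0 implies ĤWG₂ < 0, so the individually-rational welfare gains satisfy WG₁(ζ₁,ζ₂) = WG₂(ζ₁,ζ₂) = 0 for all (ζ₁,ζ₂), and every pair (γ₁*, γ₂*) ∈ [0,1]² is a Nash equilibrium. -/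
open Set

/-- Trade occurs iff `ζ₁ > ζ₂`, or `ζ₁ = ζ₂ ∈ [γ₂, γ₁]`. -/
def trades (γ₁ γ₂ ζ₁ ζ₂ : ℝ) : Prop :=
  ζ₂ < ζ₁ ∨ (ζ₁ = ζ₂ ∧ γ₂ ≤ ζ₁ ∧ ζ₁ ≤ γ₁)

noncomputable instance (γ₁ γ₂ ζ₁ ζ₂ : ℝ) : Decidable (trades γ₁ γ₂ ζ₁ ζ₂) := by
  unfold trades; infer_instance

/-- Unconstrained welfare gain of the insurer, `ĤWG₁`. -/
noncomputable def hWG1 (r : ℝ → ℝ) (γ₁ γ₂ δ ζ₁ ζ₂ : ℝ) : ℝ :=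
  if trades γ₁ γ₂ ζ₁ ζ₂ then r γ₁ - (1 - δ) * r ζ₂ - δ * r ζ₁ else 0

/-- Unconstrained welfare gain of the reinsurer, `ĤWG₂`. -/
noncomputable def hWG2 (r : ℝ → ℝ) (γ₁ γ₂ δ ζ₁ ζ₂ : ℝ) : ℝ :=
  if trades γ₁ γ₂ ζ₁ ζ₂ then -(r γ₂) + (1 - δ) * r ζ₂ + δ * r ζ₁ else 0

/-- Individually-rational welfare gain of the insurer, `WG₁`. -/
noncomputable def WG1 (r : ℝ → ℝ) (γ₁ γ₂ δ ζ₁ ζ₂ : ℝ) : ℝ :=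
  if 0 ≤ hWG1 r γ₁ γ₂ δ ζ₁ ζ₂ ∧ 0 ≤ hWG2 r γ₁ γ₂ δ ζ₁ ζ₂ then
    hWG1 r γ₁ γ₂ δ ζ₁ ζ₂ else 0

/-- Individually-rational welfare gain of the reinsurer, `WG₂`. -/
noncomputable def WG2 (r : ℝ → ℝ) (γ₁ γ₂ δ ζ₁ ζ₂ : ℝ) : ℝ :=
  if 0 ≤ hWG1 r γ₁ γ₂ δ ζ₁ ζ₂ ∧ 0 ≤ hWG2 r γ₁ γ₂ δ ζ₁ ζ₂ then
    hWG2 r γ₁ γ₂ δ ζ₁ ζ₂ else 0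

/-- `(a, b)` is a Nash equilibrium of the welfare-gain game. -/
def IsNash (r : ℝ → ℝ) (γ₁ γ₂ δ a b : ℝ) : Prop :=
  a ∈ Icc (0:ℝ) 1 ∧ b ∈ Icc (0:ℝ) 1 ∧
  (∀ ζ₁ ∈ Icc (0:ℝ) 1, WG1 r γ₁ γ₂ δ ζ₁ b ≤ WG1 r γ₁ γ₂ δ a b) ∧
  (∀ ζ₂ ∈ Icc (0:ℝ) 1, WG2 r γ₁ γ₂ δ a ζ₂ ≤ WG2 r γ₁ γ₂ δ a b)

/-- If `γ₁ ≤ γ₂`, the sum of unconstrained welfare gains is `≤ 0` for every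
pair of submitted strategies in `[0,1]²` (so `ĤWG₁ > 0` forces `ĤWG₂ < 0`),
the individually-rational welfare gains vanish identically, and every pair
`(γ₁*, γ₂*) ∈ [0,1]²` is a Nash equilibrium. -/
theorem all_pairs_nash_of_le (r : ℝ → ℝ)
    (hr : StrictMonoOn r (Icc (0:ℝ) 1)) (hrc : ContinuousOn r (Icc (0:ℝ) 1))
    (δ : ℝ) (hδ : δ ∈ Ioo (0:ℝ) 1)
    (γ₁ γ₂ : ℝ) (hγ₁ : γ₁ ∈ Icc (0:ℝ) 1) (hγ₂ : γ₂ ∈ Icc (0:ℝ) 1)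
    (hle : γ₁ ≤ γ₂) :
    (∀ ζ₁ ∈ Icc (0:ℝ) 1, ∀ ζ₂ ∈ Icc (0:ℝ) 1,
      hWG1 r γ₁ γ₂ δ ζ₁ ζ₂ + hWG2 r γ₁ γ₂ δ ζ₁ ζ₂ ≤ 0)
    ∧ (∀ ζ₁ ∈ Icc (0:ℝ) 1, ∀ ζ₂ ∈ Icc (0:ℝ) 1,
      0 < hWG1 r γ₁ γ₂ δ ζ₁ ζ₂ → hWG2 r γ₁ γ₂ δ ζ₁ ζ₂ < 0)
    ∧ (∀ ζ₁ ∈ Icc (0:ℝ) 1, ∀ ζ₂ ∈ Icc (0:ℝ) 1,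
      WG1 r γ₁ γ₂ δ ζ₁ ζ₂ = 0 ∧ WG2 r γ₁ γ₂ δ ζ₁ ζ₂ = 0)
    ∧ (∀ a ∈ Icc (0:ℝ) 1, ∀ b ∈ Icc (0:ℝ) 1, IsNash r γ₁ γ₂ δ a b) := by

  have hmono : r γ₁ ≤ r γ₂ := hr.monotoneOn hγ₁ hγ₂ hle
  have hsum : ∀ ζ₁ ζ₂ : ℝ,
      hWG1 r γ₁ γ₂ δ ζ₁ ζ₂ + hWG2 r γ₁ γ₂ δ ζ₁ ζ₂ ≤ 0 := by
    intro ζ₁ ζ₂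
    unfold hWG1 hWG2
    by_cases h : trades γ₁ γ₂ ζ₁ ζ₂ <;> simp [h] <;> linarith
  have hwg : ∀ ζ₁ ζ₂ : ℝ,
      WG1 r γ₁ γ₂ δ ζ₁ ζ₂ = 0 ∧ WG2 r γ₁ γ₂ δ ζ₁ ζ₂ = 0 := by
    intro ζ₁ ζ₂
    unfold WG1 WG2
    by_cases h : 0 ≤ hWG1 r γ₁ γ₂ δ ζ₁ ζ₂ ∧ 0 ≤ hWG2 r γ₁ γ₂ δ ζ₁ ζ₂
    · have := hsum ζ₁ ζ₂
      constructor <;> rw [if_pos h] <;> linarith [h.1, h.2]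
    · simp [h]
  refine ⟨fun ζ₁ _ ζ₂ _ => hsum ζ₁ ζ₂, fun ζ₁ _ ζ₂ _ h1 => by linarith [hsum ζ₁ ζ₂],
    fun ζ₁ _ ζ₂ _ => hwg ζ₁ ζ₂, fun a ha b hb => ?_⟩
  exact ⟨ha, hb, fun ζ₁ _ => by rw [(hwg ζ₁ b).1, (hwg a b).1],
    fun ζ₂ _ => by rw [(hwg a ζ₂).2, (hwg a b).2]⟩
end

section
/- Assume γ₁ > γ₂. If ζ₁ ∈ (γ₂, γ₁], then the unique maximizer over ζ₂ ∈ [0,1] of WG₂(ζ₁, ζ₂) is ζ₂ = ζ₁ (i.e., the reinsurer's best response is to mimic the insurer's submitted risk aversion). -/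
open Set

/-- If `γ₁ > γ₂` and `ζ₁ ∈ (γ₂, γ₁]`, the unique maximizer over `ζ₂ ∈ [0,1]`
of `WG₂(ζ₁, ·)` is `ζ₂ = ζ₁`: the reinsurer's best response is to mimic the
insurer's submitted risk aversion. -/
theorem best_response_mimic (r : ℝ → ℝ)
    (hr : StrictMonoOn r (Icc (0:ℝ) 1)) (hrc : ContinuousOn r (Icc (0:ℝ) 1))
    (δ : ℝ) (hδ : δ ∈ Ioo (0:ℝ) 1)
    (γ₁ γ₂ : ℝ) (hγ₁ : γ₁ ∈ Icc (0:ℝ) 1) (hγ₂ : γ₂ ∈ Icc (0:ℝ) 1)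
    (hlt : γ₂ < γ₁)
    (ζ₁ : ℝ) (hζ₁ : ζ₁ ∈ Ioc γ₂ γ₁) :
    ∀ ζ₂ ∈ Icc (0:ℝ) 1, ζ₂ ≠ ζ₁ →
      WG2 r γ₁ γ₂ δ ζ₁ ζ₂ < WG2 r γ₁ γ₂ δ ζ₁ ζ₁ := by
  intro ζ₂ hζ₂ hne
  have hζ₁01 : ζ₁ ∈ Icc (0:ℝ) 1 := ⟨le_trans hγ₂.1 hζ₁.1.le, le_trans hζ₁.2 hγ₁.2⟩
  have htr : trades γ₁ γ₂ ζ₁ ζ₁ := Or.inr ⟨rfl, hζ₁.1.le, hζ₁.2⟩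
  have h1 : hWG1 r γ₁ γ₂ δ ζ₁ ζ₁ = r γ₁ - r ζ₁ := by
    simp only [hWG1, if_pos htr]; ring
  have h2 : hWG2 r γ₁ γ₂ δ ζ₁ ζ₁ = r ζ₁ - r γ₂ := by
    simp only [hWG2, if_pos htr]; ring
  have hr1 : r ζ₁ ≤ r γ₁ := hr.monotoneOn hζ₁01 hγ₁ hζ₁.2
  have hr2 : r γ₂ < r ζ₁ := hr hγ₂ hζ₁01 hζ₁.1
  have hWG2eq : WG2 r γ₁ γ₂ δ ζ₁ ζ₁ = r ζ₁ - r γ₂ := by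
    rw [WG2, if_pos ⟨by rw [h1]; linarith, by rw [h2]; linarith⟩, h2]
  rw [hWG2eq]
  rcases lt_or_gt_of_ne hne with hlt2 | hgt2
  · -- ζ₂ < ζ₁ : trade occurs
    have htr2 : trades γ₁ γ₂ ζ₁ ζ₂ := Or.inl hlt2
    have hrlt : r ζ₂ < r ζ₁ := hr hζ₂ hζ₁01 hlt2
    have hval : hWG2 r γ₁ γ₂ δ ζ₁ ζ₂ = -(r γ₂) + (1 - δ) * r ζ₂ + δ * r ζ₁ := by
      simp only [hWG2, if_pos htr2]
    have hkey : hWG2 r γ₁ γ₂ δ ζ₁ ζ₂ < r ζ₁ - r γ₂ := by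
      rw [hval]; nlinarith [hδ.1, hδ.2]
    rw [WG2]
    split
    · exact hkey
    · linarith
  · -- ζ₁ < ζ₂ : no trade
    have htr2 : ¬ trades γ₁ γ₂ ζ₁ ζ₂ := by
      rintro (h | ⟨h, -⟩) <;> linarith [h]
    rw [WG2]
    have hz : hWG2 r γ₁ γ₂ δ ζ₁ ζ₂ = 0 := by simp [hWG2, htr2]
    split <;> simp [hz] <;> linarith
end

section
/- Assume γ₁ > γ₂ and define Γ₁ = inf{ζ ∈ [0,1] : r(γ₁) − (1−δ)r(0) − δ r(ζ) < 0}. If ζ₁ ∈ (γ₁, Γ₁], then there exists a unique f₂(ζ₁) ∈ [0, ζ₁) such that r(γ₁) − (1−δ)r(f₂(ζ₁)) − δ r(ζ₁) = 0, and f₂ is strictly decreasing on (γ₁, Γ₁]. -/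
open Set

/-- Let `Γ₁ = inf {ζ ∈ [0,1] : r γ₁ - (1-δ) r 0 - δ r ζ < 0}`.
For every `ζ₁ ∈ (γ₁, Γ₁]` there is a unique `f₂(ζ₁) ∈ [0, ζ₁)` with
`r γ₁ - (1-δ) r (f₂ ζ₁) - δ r ζ₁ = 0`, and `f₂` is strictly decreasing on
`(γ₁, Γ₁]` (expressed via the roots). -/
theorem indifference_response_exists_unique (r : ℝ → ℝ)
    (hr : StrictMonoOn r (Icc (0:ℝ) 1)) (hrc : ContinuousOn r (Icc (0:ℝ) 1))
    (δ : ℝ) (hδ : δ ∈ Ioo (0:ℝ) 1)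
    (γ₁ γ₂ : ℝ) (hγ₁ : γ₁ ∈ Icc (0:ℝ) 1) (hγ₂ : γ₂ ∈ Icc (0:ℝ) 1)
    (hlt : γ₂ < γ₁)
    (Γ₁ : ℝ)
    (hΓ₁ : Γ₁ = sInf {ζ ∈ Icc (0:ℝ) 1 | r γ₁ - (1 - δ) * r 0 - δ * r ζ < 0})
    (hne : {ζ ∈ Icc (0:ℝ) 1 | r γ₁ - (1 - δ) * r 0 - δ * r ζ < 0}.Nonempty) :
    (∀ ζ₁ ∈ Icc (0:ℝ) 1, γ₁ < ζ₁ → ζ₁ ≤ Γ₁ →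
      ∃! z : ℝ, z ∈ Ico (0:ℝ) ζ₁ ∧ r γ₁ - (1 - δ) * r z - δ * r ζ₁ = 0)
    ∧ (∀ ζ₁ ∈ Icc (0:ℝ) 1, ∀ ζ₁' ∈ Icc (0:ℝ) 1,
        γ₁ < ζ₁ → ζ₁ ≤ Γ₁ → γ₁ < ζ₁' → ζ₁' ≤ Γ₁ → ζ₁ < ζ₁' →
        ∀ z z' : ℝ, z ∈ Ico (0:ℝ) ζ₁ → z' ∈ Ico (0:ℝ) ζ₁' →
          r γ₁ - (1 - δ) * r z - δ * r ζ₁ = 0 →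
          r γ₁ - (1 - δ) * r z' - δ * r ζ₁' = 0 → z' < z) := by
  obtain ⟨hδ0, hδ1⟩ := hδ
  have h1δ : (0:ℝ) < 1 - δ := by linarith
  have hbdd : BddBelow {ζ ∈ Icc (0:ℝ) 1 | r γ₁ - (1 - δ) * r 0 - δ * r ζ < 0} :=
    ⟨0, fun x hx => hx.1.1⟩
  have hΓlb : ∀ ζ ∈ {ζ ∈ Icc (0:ℝ) 1 | r γ₁ - (1 - δ) * r 0 - δ * r ζ < 0}, Γ₁ ≤ ζ :=
    fun ζ hζ => hΓ₁ ▸ csInf_le hbdd hζ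
  have key : ∀ ζ₁ ∈ Icc (0:ℝ) 1, γ₁ < ζ₁ → ζ₁ ≤ Γ₁ →
      0 ≤ r γ₁ - (1 - δ) * r 0 - δ * r ζ₁ := by
    intro ζ₁ hζ₁ hgt hle
    by_contra hneg
    push_neg at hneg
    have hmem : ζ₁ ∈ {ζ ∈ Icc (0:ℝ) 1 | r γ₁ - (1 - δ) * r 0 - δ * r ζ < 0} := ⟨hζ₁, hneg⟩
    have heq : ζ₁ = Γ₁ := le_antisymm hle (hΓlb _ hmem)
    have hφ : ContinuousWithinAt (fun ζ => r γ₁ - (1 - δ) * r 0 - δ * r ζ)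
        (Icc (0:ℝ) 1) ζ₁ :=
      (continuousWithinAt_const.sub continuousWithinAt_const).sub
        (continuousWithinAt_const.mul (hrc ζ₁ hζ₁))
    have hev : ∀ᶠ ζ in nhdsWithin ζ₁ (Icc (0:ℝ) 1),
        r γ₁ - (1 - δ) * r 0 - δ * r ζ < 0 := hφ (Iio_mem_nhds hneg)
    have hsub : Ioo γ₁ ζ₁ ⊆ Icc (0:ℝ) 1 :=
      fun x hx => ⟨le_of_lt (lt_of_le_of_lt hγ₁.1 hx.1), hx.2.le.trans hζ₁.2⟩
    have hne' : (nhdsWithin ζ₁ (Ioo γ₁ ζ₁)).NeBot := right_nhdsWithin_Ioo_neBot hgt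
    have hev' : ∀ᶠ ζ in nhdsWithin ζ₁ (Ioo γ₁ ζ₁),
        r γ₁ - (1 - δ) * r 0 - δ * r ζ < 0 := hev.filter_mono (nhdsWithin_mono _ hsub)
    obtain ⟨ζ, hζneg, hζIoo⟩ := (hev'.and (eventually_mem_nhdsWithin)).exists
    have : Γ₁ ≤ ζ := hΓlb _ ⟨hsub hζIoo, hζneg⟩
    have : ζ < Γ₁ := heq ▸ hζIoo.2
    linarith
  constructor
  · intro ζ₁ hζ₁ hgt hle
    have h0 : (0:ℝ) ≤ ζ₁ := hζ₁.1
    have hgc : ContinuousOn (fun z => r γ₁ - (1 - δ) * r z - δ * r ζ₁) (Icc 0 ζ₁) := by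
      refine (continuousOn_const.sub (continuousOn_const.mul
        (hrc.mono ?_))).sub continuousOn_const
      exact fun x hx => ⟨hx.1, hx.2.trans hζ₁.2⟩
    have hgb : r γ₁ - (1 - δ) * r ζ₁ - δ * r ζ₁ < 0 := by
      have : r γ₁ < r ζ₁ := hr hγ₁ hζ₁ hgt
      nlinarith
    have hga : 0 ≤ r γ₁ - (1 - δ) * r 0 - δ * r ζ₁ := key ζ₁ hζ₁ hgt hle
    have hiv := intermediate_value_Icc' h0 hgc
    obtain ⟨z, hzI, hz0'⟩ := hiv ⟨le_of_lt hgb, hga⟩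
    have hz0 : r γ₁ - (1 - δ) * r z - δ * r ζ₁ = 0 := hz0'
    have hzne : z ≠ ζ₁ := by
      intro h; rw [h] at hz0; linarith
    refine ⟨z, ⟨⟨hzI.1, lt_of_le_of_ne hzI.2 hzne⟩, hz0⟩, ?_⟩
    rintro y ⟨hyI, hy0⟩
    have hy1 : y ∈ Icc (0:ℝ) 1 := ⟨hyI.1, (le_of_lt hyI.2).trans hζ₁.2⟩
    have hz1 : z ∈ Icc (0:ℝ) 1 := ⟨hzI.1, hzI.2.trans hζ₁.2⟩
    have : r y = r z := by
      have h1 : (1 - δ) * r y = (1 - δ) * r z := by linarith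
      exact mul_left_cancel₀ (ne_of_gt h1δ) h1
    exact hr.injOn hy1 hz1 this
  · intro ζ₁ hζ₁ ζ₁' hζ₁' hgt hle hgt' hle' hlt' z z' hz hz' heqz heqz'
    have hz1 : z ∈ Icc (0:ℝ) 1 := ⟨hz.1, (le_of_lt hz.2).trans hζ₁.2⟩
    have hz1' : z' ∈ Icc (0:ℝ) 1 := ⟨hz'.1, (le_of_lt hz'.2).trans hζ₁'.2⟩
    have hrζ : r ζ₁ < r ζ₁' := hr hζ₁ hζ₁' hlt'
    have : (1 - δ) * r z' < (1 - δ) * r z := by nlinarith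
    have hrz : r z' < r z := lt_of_mul_lt_mul_left this (le_of_lt h1δ)
    exact (hr.lt_iff_lt hz1' hz1).mp hrz
end

section
/- Assume γ₁ > γ₂. Then for every γ ∈ [γ₂, γ₁], the diagonal pair (γ, γ) is a Nash equilibrium of the welfare-gain game. -/
open Set

/-- If `γ₁ > γ₂`, then for every `γ ∈ [γ₂, γ₁]` the diagonal pair `(γ, γ)`
is a Nash equilibrium of the welfare-gain game. -/
theorem diagonal_nash (r : ℝ → ℝ)
    (hr : StrictMonoOn r (Icc (0:ℝ) 1)) (hrc : ContinuousOn r (Icc (0:ℝ) 1))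
    (δ : ℝ) (hδ : δ ∈ Ioo (0:ℝ) 1)
    (γ₁ γ₂ : ℝ) (hγ₁ : γ₁ ∈ Icc (0:ℝ) 1) (hγ₂ : γ₂ ∈ Icc (0:ℝ) 1)
    (hlt : γ₂ < γ₁) :
    ∀ γ ∈ Icc γ₂ γ₁, IsNash r γ₁ γ₂ δ γ γ := by
  intro γ hγ
  obtain ⟨hγl, hγr⟩ := hγ
  have hγI : γ ∈ Icc (0:ℝ) 1 := ⟨le_trans hγ₂.1 hγl, le_trans hγr hγ₁.2⟩
  have hmono := hr.monotoneOn
  have h1 : r γ ≤ r γ₁ := hmono hγI hγ₁ hγr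
  have h2 : r γ₂ ≤ r γ := hmono hγ₂ hγI hγl
  have htr : trades γ₁ γ₂ γ γ := Or.inr ⟨rfl, hγl, hγr⟩
  have hW1 : hWG1 r γ₁ γ₂ δ γ γ = r γ₁ - r γ := by
    rw [hWG1, if_pos htr]; ring
  have hW2 : hWG2 r γ₁ γ₂ δ γ γ = r γ - r γ₂ := by
    rw [hWG2, if_pos htr]; ring
  have hpos : 0 ≤ hWG1 r γ₁ γ₂ δ γ γ ∧ 0 ≤ hWG2 r γ₁ γ₂ δ γ γ :=
    ⟨by rw [hW1]; linarith, by rw [hW2]; linarith⟩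
  have hWG1γ : WG1 r γ₁ γ₂ δ γ γ = r γ₁ - r γ := by rw [WG1, if_pos hpos, hW1]
  have hWG2γ : WG2 r γ₁ γ₂ δ γ γ = r γ - r γ₂ := by rw [WG2, if_pos hpos, hW2]
  refine ⟨hγI, hγI, ?_, ?_⟩
  · intro ζ hζ
    have key : hWG1 r γ₁ γ₂ δ ζ γ ≤ r γ₁ - r γ := by
      by_cases ht : trades γ₁ γ₂ ζ γ
      · rw [hWG1, if_pos ht]
        rcases ht with hlt' | ⟨heq, _⟩
        · have hrζ : r γ ≤ r ζ := hmono hγI hζ (le_of_lt hlt')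
          nlinarith [hδ.1.le, hδ.2.le]
        · rw [heq]; ring_nf; linarith
      · rw [hWG1, if_neg ht]; linarith
    rw [hWG1γ, WG1]
    split
    · exact key
    · linarith
  · intro ζ hζ
    have key : hWG2 r γ₁ γ₂ δ γ ζ ≤ r γ - r γ₂ := by
      by_cases ht : trades γ₁ γ₂ γ ζ
      · rw [hWG2, if_pos ht]
        rcases ht with hlt' | ⟨heq, _⟩
        · have hrζ : r ζ ≤ r γ := hmono hζ hγI (le_of_lt hlt')
          nlinarith [hδ.1.le, hδ.2.le]
        · rw [← heq]; ring_nf; linarith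
      · rw [hWG2, if_neg ht]; linarith
    rw [hWG2γ, WG2]
    split
    · exact key
    · linarith
end

section
/- Assume γ₁ > γ₂. If (γ₁*, γ₂*) is a Nash equilibrium at which WG₁(γ₁*,γ₂*) > 0 or WG₂(γ₁*,γ₂*) > 0, then γ₁* = γ₂* ∈ [γ₂, γ₁]. Conversely, every pair (γ,γ) with γ ∈ [γ₂,γ₁] is a Nash equilibrium with at least one strictly positive welfare gain. -/
open Set

open Topology Filter in
/-- If `γ₁ > γ₂`, the Nash equilibria with a strictly positive welfare gain
for at least one agent are exactly the diagonal pairs `(γ, γ)` with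
`γ ∈ [γ₂, γ₁]`. -/
theorem strictly_beneficial_nash_characterization (r : ℝ → ℝ)
    (hr : StrictMonoOn r (Icc (0:ℝ) 1)) (hrc : ContinuousOn r (Icc (0:ℝ) 1))
    (δ : ℝ) (hδ : δ ∈ Ioo (0:ℝ) 1)
    (γ₁ γ₂ : ℝ) (hγ₁ : γ₁ ∈ Icc (0:ℝ) 1) (hγ₂ : γ₂ ∈ Icc (0:ℝ) 1)
    (hlt : γ₂ < γ₁) :
    (∀ a b : ℝ, IsNash r γ₁ γ₂ δ a b →
      (0 < WG1 r γ₁ γ₂ δ a b ∨ 0 < WG2 r γ₁ γ₂ δ a b) →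
      a = b ∧ a ∈ Icc γ₂ γ₁)
    ∧ (∀ γ ∈ Icc γ₂ γ₁, IsNash r γ₁ γ₂ δ γ γ ∧
        (0 < WG1 r γ₁ γ₂ δ γ γ ∨ 0 < WG2 r γ₁ γ₂ δ γ γ)) := by

  obtain ⟨hδ0, hδ1⟩ := hδ
  have hmono := hr.monotoneOn
  have hr12 : r γ₂ < r γ₁ := hr hγ₂ hγ₁ hlt
  constructor
  · rintro a b ⟨ha, hb, hN1, hN2⟩ hpos
    have hcond : 0 ≤ hWG1 r γ₁ γ₂ δ a b ∧ 0 ≤ hWG2 r γ₁ γ₂ δ a b := by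
      by_contra h
      rcases hpos with hp | hp
      · rw [WG1, if_neg h] at hp; exact absurd hp (lt_irrefl 0)
      · rw [WG2, if_neg h] at hp; exact absurd hp (lt_irrefl 0)
    have htr : trades γ₁ γ₂ a b := by
      by_contra h
      rcases hpos with hp | hp
      · rw [WG1, if_pos hcond, hWG1, if_neg h] at hp; exact absurd hp (lt_irrefl 0)
      · rw [WG2, if_pos hcond, hWG2, if_neg h] at hp; exact absurd hp (lt_irrefl 0)
    rcases htr with hba | ⟨hab, h2a, h1a⟩
    · exfalso
      have hIoo : Ioo b a ⊆ Icc (0:ℝ) 1 :=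
        fun t ht => ⟨hb.1.trans ht.1.le, ht.2.le.trans ha.2⟩
      have htrab : trades γ₁ γ₂ a b := Or.inl hba
      have eA1 : hWG1 r γ₁ γ₂ δ a b = r γ₁ - (1 - δ) * r b - δ * r a := by
        rw [hWG1, if_pos htrab]
      have eA2 : hWG2 r γ₁ γ₂ δ a b = -(r γ₂) + (1 - δ) * r b + δ * r a := by
        rw [hWG2, if_pos htrab]
      have hsum : hWG1 r γ₁ γ₂ δ a b + hWG2 r γ₁ γ₂ δ a b = r γ₁ - r γ₂ := by
        rw [eA1, eA2]; ring
      have hor : 0 < hWG2 r γ₁ γ₂ δ a b ∨ 0 < hWG1 r γ₁ γ₂ δ a b := by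
        rcases lt_or_ge 0 (hWG2 r γ₁ γ₂ δ a b) with h | h
        · exact Or.inl h
        · right; linarith
      rcases hor with h2 | h1
      · -- agent 1 deviates slightly below a
        set f : ℝ → ℝ := fun t => -(r γ₂) + (1 - δ) * r b + δ * r t with hf
        have hfa : 0 < f a := by rw [hf]; simp only []; rw [← eA2]; exact h2
        have hfc : ContinuousWithinAt f (Icc (0:ℝ) 1) a :=
          continuousWithinAt_const.add (continuousWithinAt_const.mul (hrc a ha))
        have hmem : f ⁻¹' Ioi 0 ∈ 𝓝[Icc (0:ℝ) 1] a := hfc (Ioi_mem_nhds hfa)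
        have hmem2 : f ⁻¹' Ioi 0 ∈ 𝓝[Ioo b a] a := nhdsWithin_mono a hIoo hmem
        have hclos : a ∈ closure (Ioo b a) := by
          rw [closure_Ioo hba.ne]; exact right_mem_Icc.2 hba.le
        haveI hne : (𝓝[Ioo b a] a).NeBot := mem_closure_iff_nhdsWithin_neBot.1 hclos
        obtain ⟨t, htf, htI⟩ := Filter.nonempty_of_mem (Filter.inter_mem hmem2 self_mem_nhdsWithin)
        simp only [Set.mem_preimage, Set.mem_Ioi] at htf
        have htIcc : t ∈ Icc (0:ℝ) 1 := hIoo htI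
        have htrt : trades γ₁ γ₂ t b := Or.inl htI.1
        have e1 : hWG1 r γ₁ γ₂ δ t b = r γ₁ - (1 - δ) * r b - δ * r t := by
          rw [hWG1, if_pos htrt]
        have e2 : hWG2 r γ₁ γ₂ δ t b = -(r γ₂) + (1 - δ) * r b + δ * r t := by
          rw [hWG2, if_pos htrt]
        have hrta : r t < r a := hr htIcc ha htI.2
        have key : hWG1 r γ₁ γ₂ δ a b < hWG1 r γ₁ γ₂ δ t b := by
          rw [e1, eA1]
          have := mul_lt_mul_of_pos_left hrta hδ0
          linarith
        have W1t : WG1 r γ₁ γ₂ δ t b = hWG1 r γ₁ γ₂ δ t b := by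
          rw [WG1, if_pos ⟨by linarith [hcond.1], by rw [e2]; exact htf.le⟩]
        have W1a : WG1 r γ₁ γ₂ δ a b = hWG1 r γ₁ γ₂ δ a b := by
          rw [WG1, if_pos hcond]
        have := hN1 t htIcc
        rw [W1t, W1a] at this
        linarith
      · -- agent 2 deviates slightly above b
        set g : ℝ → ℝ := fun t => r γ₁ - (1 - δ) * r t - δ * r a with hg
        have hgb : 0 < g b := by rw [hg]; simp only []; rw [← eA1]; exact h1
        have hgc : ContinuousWithinAt g (Icc (0:ℝ) 1) b := by
          apply ContinuousWithinAt.sub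
          · exact continuousWithinAt_const.sub (continuousWithinAt_const.mul (hrc b hb))
          · exact continuousWithinAt_const
        have hmem : g ⁻¹' Ioi 0 ∈ 𝓝[Icc (0:ℝ) 1] b := hgc (Ioi_mem_nhds hgb)
        have hmem2 : g ⁻¹' Ioi 0 ∈ 𝓝[Ioo b a] b := nhdsWithin_mono b hIoo hmem
        have hclos : b ∈ closure (Ioo b a) := by
          rw [closure_Ioo hba.ne]; exact left_mem_Icc.2 hba.le
        haveI hne : (𝓝[Ioo b a] b).NeBot := mem_closure_iff_nhdsWithin_neBot.1 hclos
        obtain ⟨t, htg, htI⟩ := Filter.nonempty_of_mem (Filter.inter_mem hmem2 self_mem_nhdsWithin)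
        simp only [Set.mem_preimage, Set.mem_Ioi] at htg
        have htIcc : t ∈ Icc (0:ℝ) 1 := hIoo htI
        have htrt : trades γ₁ γ₂ a t := Or.inl htI.2
        have e1 : hWG1 r γ₁ γ₂ δ a t = r γ₁ - (1 - δ) * r t - δ * r a := by
          rw [hWG1, if_pos htrt]
        have e2 : hWG2 r γ₁ γ₂ δ a t = -(r γ₂) + (1 - δ) * r t + δ * r a := by
          rw [hWG2, if_pos htrt]
        have hrbt : r b < r t := hr hb htIcc htI.1
        have key : hWG2 r γ₁ γ₂ δ a b < hWG2 r γ₁ γ₂ δ a t := by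
          rw [e2, eA2]
          have := mul_lt_mul_of_pos_left hrbt (by linarith : (0:ℝ) < 1 - δ)
          linarith
        have W2t : WG2 r γ₁ γ₂ δ a t = hWG2 r γ₁ γ₂ δ a t := by
          rw [WG2, if_pos ⟨by rw [e1]; exact htg.le, by linarith [hcond.2]⟩]
        have W2a : WG2 r γ₁ γ₂ δ a b = hWG2 r γ₁ γ₂ δ a b := by
          rw [WG2, if_pos hcond]
        have := hN2 t htIcc
        rw [W2t, W2a] at this
        linarith
    · exact ⟨hab, h2a, h1a⟩
  · intro γ hγ
    have hγI : γ ∈ Icc (0:ℝ) 1 := ⟨hγ₂.1.trans hγ.1, hγ.2.trans hγ₁.2⟩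
    have htrγ : trades γ₁ γ₂ γ γ := Or.inr ⟨rfl, hγ.1, hγ.2⟩
    have e1 : hWG1 r γ₁ γ₂ δ γ γ = r γ₁ - r γ := by rw [hWG1, if_pos htrγ]; ring
    have e2 : hWG2 r γ₁ γ₂ δ γ γ = r γ - r γ₂ := by rw [hWG2, if_pos htrγ]; ring
    have hγ1 : r γ ≤ r γ₁ := hmono hγI hγ₁ hγ.2
    have hγ2 : r γ₂ ≤ r γ := hmono hγ₂ hγI hγ.1
    have hcondγ : 0 ≤ hWG1 r γ₁ γ₂ δ γ γ ∧ 0 ≤ hWG2 r γ₁ γ₂ δ γ γ :=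
      ⟨by rw [e1]; linarith, by rw [e2]; linarith⟩
    have W1 : WG1 r γ₁ γ₂ δ γ γ = r γ₁ - r γ := by rw [WG1, if_pos hcondγ, e1]
    have W2 : WG2 r γ₁ γ₂ δ γ γ = r γ - r γ₂ := by rw [WG2, if_pos hcondγ, e2]
    refine ⟨⟨hγI, hγI, ?_, ?_⟩, ?_⟩
    · intro ζ₁ hζ₁
      rw [W1, WG1]
      split_ifs with h
      · rw [hWG1]
        split_ifs with ht
        · have hζγ : r γ ≤ r ζ₁ := by
            rcases ht with h' | ⟨h', _⟩
            · exact hmono hγI hζ₁ h'.le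
            · rw [h']
          have := mul_le_mul_of_nonneg_left hζγ hδ0.le
          linarith
        · linarith
      · linarith
    · intro ζ₂ hζ₂
      rw [W2, WG2]
      split_ifs with h
      · rw [hWG2]
        split_ifs with ht
        · have hζγ : r ζ₂ ≤ r γ := by
            rcases ht with h' | ⟨h', _⟩
            · exact hmono hζ₂ hγI h'.le
            · rw [← h']
          have := mul_le_mul_of_nonneg_left hζγ (by linarith : (0:ℝ) ≤ 1 - δ)
          linarith
        · linarith
      · linarith
    · rcases lt_or_eq_of_le hγ.2 with h | h
      · left; rw [W1]; have := hr hγI hγ₁ h; linarith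
      · right; rw [W2, h]; linarith
end

section
/- Assume γ₁ > γ₂. In the Stackelberg equilibrium with the insurer as leader, the equilibrium strategies are (γ₂, γ₂), the insurer's welfare gain is r(γ₁) − r(γ₂) > 0, and the reinsurer's welfare gain is 0; symmetrically, with the reinsurer as leader the equilibrium is (γ₁, γ₁), the reinsurer gains r(γ₁) − r(γ₂) > 0 and the insurer gains 0. -/
open Set

/-- `b` is a best response of the reinsurer (follower) to `a`. -/
def BR2 (r : ℝ → ℝ) (γ₁ γ₂ δ a b : ℝ) : Prop :=
  b ∈ Icc (0:ℝ) 1 ∧ ∀ ζ₂ ∈ Icc (0:ℝ) 1, WG2 r γ₁ γ₂ δ a ζ₂ ≤ WG2 r γ₁ γ₂ δ a b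

/-- `a` is a best response of the insurer (follower) to `b`. -/
def BR1 (r : ℝ → ℝ) (γ₁ γ₂ δ a b : ℝ) : Prop :=
  a ∈ Icc (0:ℝ) 1 ∧ ∀ ζ₁ ∈ Icc (0:ℝ) 1, WG1 r γ₁ γ₂ δ ζ₁ b ≤ WG1 r γ₁ γ₂ δ a b

/-- Stackelberg equilibrium with the insurer as leader. -/
def StackInsLeader (r : ℝ → ℝ) (γ₁ γ₂ δ a b : ℝ) : Prop :=
  a ∈ Icc (0:ℝ) 1 ∧ BR2 r γ₁ γ₂ δ a b ∧
  ∀ a' ∈ Icc (0:ℝ) 1, ∀ b' : ℝ, BR2 r γ₁ γ₂ δ a' b' →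
    WG1 r γ₁ γ₂ δ a' b' ≤ WG1 r γ₁ γ₂ δ a b

/-- Stackelberg equilibrium with the reinsurer as leader. -/
def StackReinsLeader (r : ℝ → ℝ) (γ₁ γ₂ δ a b : ℝ) : Prop :=
  b ∈ Icc (0:ℝ) 1 ∧ BR1 r γ₁ γ₂ δ a b ∧
  ∀ b' ∈ Icc (0:ℝ) 1, ∀ a' : ℝ, BR1 r γ₁ γ₂ δ a' b' →
    WG2 r γ₁ γ₂ δ a' b' ≤ WG2 r γ₁ γ₂ δ a b

lemma trades_diag {γ₁ γ₂ ζ : ℝ} (h1 : γ₂ ≤ ζ) (h2 : ζ ≤ γ₁) : trades γ₁ γ₂ ζ ζ :=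
  Or.inr ⟨rfl, h1, h2⟩

lemma WG1_le (r : ℝ → ℝ) (γ₁ γ₂ δ ζ₁ ζ₂ : ℝ) (h : r γ₂ ≤ r γ₁) :
    WG1 r γ₁ γ₂ δ ζ₁ ζ₂ ≤ r γ₁ - r γ₂ := by
  unfold WG1 hWG1 hWG2
  by_cases ht : trades γ₁ γ₂ ζ₁ ζ₂ <;>
    simp only [ht, if_pos, if_neg, if_true, if_false, not_false_iff] <;>
    split_ifs with hc
  · obtain ⟨h1, h2⟩ := hc; linarith
  · linarith
  · linarith
  · linarith

lemma WG2_le (r : ℝ → ℝ) (γ₁ γ₂ δ ζ₁ ζ₂ : ℝ) (h : r γ₂ ≤ r γ₁) :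
    WG2 r γ₁ γ₂ δ ζ₁ ζ₂ ≤ r γ₁ - r γ₂ := by
  unfold WG2 hWG1 hWG2
  by_cases ht : trades γ₁ γ₂ ζ₁ ζ₂ <;>
    simp only [ht, if_pos, if_neg, if_true, if_false, not_false_iff] <;>
    split_ifs with hc
  · obtain ⟨h1, h2⟩ := hc; linarith
  · linarith
  · linarith
  · linarith

lemma WG2_col (r : ℝ → ℝ) (hr : StrictMonoOn r (Icc (0:ℝ) 1)) (δ : ℝ)
    (hδ : δ ∈ Ioo (0:ℝ) 1) (γ₁ γ₂ : ℝ) (hγ₁ : γ₁ ∈ Icc (0:ℝ) 1)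
    (hγ₂ : γ₂ ∈ Icc (0:ℝ) 1) (hlt : γ₂ < γ₁)
    (ζ₂ : ℝ) (hζ : ζ₂ ∈ Icc (0:ℝ) 1) :
    WG2 r γ₁ γ₂ δ γ₂ ζ₂ = 0 := by
  rcases lt_trichotomy ζ₂ γ₂ with h | h | h
  · have ht : trades γ₁ γ₂ γ₂ ζ₂ := Or.inl h
    have hrlt : r ζ₂ < r γ₂ := hr hζ hγ₂ h
    have h2 : hWG2 r γ₁ γ₂ δ γ₂ ζ₂ < 0 := by
      simp only [hWG2, if_pos ht]; nlinarith [hδ.2]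
    simp [WG2, not_le.2 h2]
  · rw [h]
    have hz : hWG2 r γ₁ γ₂ δ γ₂ γ₂ = 0 := by
      simp only [hWG2, if_pos (trades_diag le_rfl hlt.le)]; ring
    simp [WG2, hz]
  · have ht : ¬ trades γ₁ γ₂ γ₂ ζ₂ := by
      rintro (hc | ⟨hc, -⟩) <;> linarith
    simp [WG2, hWG1, hWG2, ht]

lemma WG1_row (r : ℝ → ℝ) (hr : StrictMonoOn r (Icc (0:ℝ) 1)) (δ : ℝ)
    (hδ : δ ∈ Ioo (0:ℝ) 1) (γ₁ γ₂ : ℝ) (hγ₁ : γ₁ ∈ Icc (0:ℝ) 1)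
    (hγ₂ : γ₂ ∈ Icc (0:ℝ) 1) (hlt : γ₂ < γ₁)
    (ζ₁ : ℝ) (hζ : ζ₁ ∈ Icc (0:ℝ) 1) :
    WG1 r γ₁ γ₂ δ ζ₁ γ₁ = 0 := by
  rcases lt_trichotomy ζ₁ γ₁ with h | h | h
  · have ht : ¬ trades γ₁ γ₂ ζ₁ γ₁ := by
      rintro (hc | ⟨hc, -⟩) <;> linarith
    simp [WG1, hWG1, hWG2, ht]
  · rw [h]
    have hz : hWG1 r γ₁ γ₂ δ γ₁ γ₁ = 0 := by
      simp only [hWG1, if_pos (trades_diag hlt.le le_rfl)]; ring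
    simp [WG1, hz]
  · have ht : trades γ₁ γ₂ ζ₁ γ₁ := Or.inl h
    have hrlt : r γ₁ < r ζ₁ := hr hγ₁ hζ h
    have h1 : hWG1 r γ₁ γ₂ δ ζ₁ γ₁ < 0 := by
      simp only [hWG1, if_pos ht]; nlinarith [hδ.1]
    simp [WG1, not_le.2 h1]

/-- If `γ₁ > γ₂`: with the insurer as leader the Stackelberg equilibrium is
`(γ₂, γ₂)`, where the insurer gains `r γ₁ - r γ₂ > 0` and the reinsurer
gains `0`; symmetrically with the reinsurer as leader the equilibrium is
`(γ₁, γ₁)`, where the reinsurer gains `r γ₁ - r γ₂ > 0` and the insurer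
gains `0`. -/
theorem stackelberg_equilibria (r : ℝ → ℝ)
    (hr : StrictMonoOn r (Icc (0:ℝ) 1)) (hrc : ContinuousOn r (Icc (0:ℝ) 1))
    (δ : ℝ) (hδ : δ ∈ Ioo (0:ℝ) 1)
    (γ₁ γ₂ : ℝ) (hγ₁ : γ₁ ∈ Icc (0:ℝ) 1) (hγ₂ : γ₂ ∈ Icc (0:ℝ) 1)
    (hlt : γ₂ < γ₁) :
    (StackInsLeader r γ₁ γ₂ δ γ₂ γ₂ ∧
      WG1 r γ₁ γ₂ δ γ₂ γ₂ = r γ₁ - r γ₂ ∧ 0 < WG1 r γ₁ γ₂ δ γ₂ γ₂ ∧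
      WG2 r γ₁ γ₂ δ γ₂ γ₂ = 0)
    ∧ (StackReinsLeader r γ₁ γ₂ δ γ₁ γ₁ ∧
      WG2 r γ₁ γ₂ δ γ₁ γ₁ = r γ₁ - r γ₂ ∧ 0 < WG2 r γ₁ γ₂ δ γ₁ γ₁ ∧
      WG1 r γ₁ γ₂ δ γ₁ γ₁ = 0) := by
  have hrlt : r γ₂ < r γ₁ := hr hγ₂ hγ₁ hlt
  -- values at (γ₂, γ₂)
  have h1a : hWG1 r γ₁ γ₂ δ γ₂ γ₂ = r γ₁ - r γ₂ := by
    simp only [hWG1, if_pos (trades_diag le_rfl hlt.le)]; ring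
  have h2a : hWG2 r γ₁ γ₂ δ γ₂ γ₂ = 0 := by
    simp only [hWG2, if_pos (trades_diag le_rfl hlt.le)]; ring
  have hW1a : WG1 r γ₁ γ₂ δ γ₂ γ₂ = r γ₁ - r γ₂ := by
    simp only [WG1, h1a, h2a]
    rw [if_pos ⟨by linarith, le_rfl⟩]
  have hW2a : WG2 r γ₁ γ₂ δ γ₂ γ₂ = 0 :=
    WG2_col r hr δ hδ γ₁ γ₂ hγ₁ hγ₂ hlt γ₂ hγ₂
  -- values at (γ₁, γ₁)
  have h1b : hWG1 r γ₁ γ₂ δ γ₁ γ₁ = 0 := by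
    simp only [hWG1, if_pos (trades_diag hlt.le le_rfl)]; ring
  have h2b : hWG2 r γ₁ γ₂ δ γ₁ γ₁ = r γ₁ - r γ₂ := by
    simp only [hWG2, if_pos (trades_diag hlt.le le_rfl)]; ring
  have hW2b : WG2 r γ₁ γ₂ δ γ₁ γ₁ = r γ₁ - r γ₂ := by
    simp only [WG2, h1b, h2b]
    rw [if_pos ⟨le_rfl, by linarith⟩]
  have hW1b : WG1 r γ₁ γ₂ δ γ₁ γ₁ = 0 :=
    WG1_row r hr δ hδ γ₁ γ₂ hγ₁ hγ₂ hlt γ₁ hγ₁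
  refine ⟨⟨⟨hγ₂, ⟨hγ₂, ?_⟩, ?_⟩, hW1a, by rw [hW1a]; linarith, hW2a⟩,
    ⟨hγ₁, ⟨hγ₁, ?_⟩, ?_⟩, hW2b, by rw [hW2b]; linarith, hW1b⟩
  · intro ζ₂ hζ₂
    rw [WG2_col r hr δ hδ γ₁ γ₂ hγ₁ hγ₂ hlt ζ₂ hζ₂, hW2a]
  · intro a' _ b' _
    rw [hW1a]; exact WG1_le r γ₁ γ₂ δ a' b' hrlt.le
  · intro ζ₁ hζ₁
    rw [WG1_row r hr δ hδ γ₁ γ₂ hγ₁ hγ₂ hlt ζ₁ hζ₁, hW1b]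
  · intro b' _ a' _
    rw [hW2b]; exact WG2_le r γ₁ γ₂ δ a' b' hrlt.le
end
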